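/- For every real number c with 0 < c < 1/4, the function F(c) = c − (3c − 1/2)·ln c + (1 − 4c)^{3/2}·artanh(√(1 − 4c)) has derivative at c equal to −3·ln c − 6·√(1 − 4c)·artanh(√(1 − 4c)). Consequently the probability density function of the area ratio Q on (0, 1/4) is PDF(c) = −3·ln c − 6·√(1 − 4c)·artanh(√(1 − 4c)). -/

import Mathlib

/-!
Differentiate term by term. Since `artanh' a = 1 / (1 - a²)`, which at `a = √(1 - 4c)` is
`1 / (4c)`, the derivative of the `artanh` factor contributes `-(1 - 4c) / (2c)`; this cancels the
rational part `1 - (3c - 1/2) / c` coming from the first two terms, and only the logarithm and the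
derivative of `(1 - 4c)^{3/2}` survive.
-/

open Real

noncomputable def artanh (a : ℝ) : ℝ := (1 / 2) * Real.log ((1 + a) / (1 - a))

theorem hasDerivAt_artanh {a : ℝ} (ha : |a| < 1) : HasDerivAt _root_.artanh (1 - a ^ 2)⁻¹ a := by
  obtain ⟨ha₁, ha₂⟩ := abs_lt.mp ha
  have hquot : HasDerivAt (fun x => (1 + x) / (1 - x)) (2 / (1 - a) ^ 2) a := by
    refine (((hasDerivAt_id' a).const_add 1).div ((hasDerivAt_id' a).const_sub 1)
      (by linarith)).congr_deriv ?_
    ring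
  refine ((hquot.log (div_pos (by linarith) (by linarith)).ne').const_mul (1 / 2)).congr_deriv ?_
  have : 1 - a ^ 2 ≠ 0 := by nlinarith
  field_simp [show 1 - a ≠ 0 by linarith, show 1 + a ≠ 0 by linarith]
  ring

theorem HasDerivAt.artanh {f : ℝ → ℝ} {f' x : ℝ} (hf : HasDerivAt f f' x) (hx : |f x| < 1) :
    HasDerivAt (fun y => _root_.artanh (f y)) (f' / (1 - f x ^ 2)) x :=
  ((hasDerivAt_artanh hx).comp x hf).congr_deriv (by rw [mul_comm, div_eq_mul_inv])

/-- For `0 < c < 1/4`, the CDF branch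
`F(c) = c − (3c − 1/2)·ln c + (1 − 4c)^{3/2}·artanh √(1 − 4c)` has derivative
`−3·ln c − 6·√(1 − 4c)·artanh √(1 − 4c)`; this is the PDF of the area ratio on `(0, 1/4)`. -/
theorem pdf_left (c : ℝ) (hc0 : 0 < c) (hc : c < 1 / 4) :
    HasDerivAt (fun x : ℝ => x - (3 * x - 1 / 2) * Real.log x +
        (1 - 4 * x) ^ ((3 : ℝ) / 2) * _root_.artanh (Real.sqrt (1 - 4 * x)))
      (-3 * Real.log c - 6 * Real.sqrt (1 - 4 * c) * _root_.artanh (Real.sqrt (1 - 4 * c))) c := by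
  have hu₀ : 0 < 1 - 4 * c := by linarith
  have hu : HasDerivAt (fun x : ℝ => 1 - 4 * x) (-4) c := by
    simpa using ((hasDerivAt_id c).const_mul 4).const_sub 1
  have hlin : HasDerivAt (fun x : ℝ => 3 * x - 1 / 2) 3 c := by
    simpa using ((hasDerivAt_id c).const_mul 3).sub_const (1 / 2)
  have hsqrt_lt : |√(1 - 4 * c)| < 1 := by
    rw [abs_of_nonneg (sqrt_nonneg _), sqrt_lt' one_pos]
    linarith
  refine (((hasDerivAt_id' c).sub (hlin.mul (hasDerivAt_log hc0.ne'))).add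
    ((hu.rpow_const (p := 3 / 2) (Or.inl hu₀.ne')).mul
      ((hu.sqrt hu₀.ne').artanh hsqrt_lt))).congr_deriv ?_
  rw [show (3 : ℝ) / 2 - 1 = 1 / 2 by norm_num, ← sqrt_eq_rpow,
    show (3 : ℝ) / 2 = 1 + 1 / 2 by norm_num, rpow_add hu₀, rpow_one, ← sqrt_eq_rpow,
    sq_sqrt hu₀.le, sub_sub_cancel]
  have hs : √(1 - 4 * c) ≠ 0 := (sqrt_pos.mpr hu₀).ne'
  generalize √(1 - 4 * c) = s at hs ⊢
  field_simp
  ring
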